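/- arXiv:0905.1890 — 2 statements merged into one kernel-verified Lean document; each statement's English description precedes it below -/
import Mathlib

section
/- Two Hom-Lie bialgebras sl(2)_α and sl(2)_β, where α and β are the non-zero Lie bialgebra endomorphisms of sl(2,ℂ) determined by non-zero scalars b and b' respectively (α(H)=H, α(X±)=b^{±1}X±), are isomorphic if and only if b = b'. -/
open TensorProduct

variable {k : Type*} [Field k]
variable {L : Type*} [AddCommGroup L] [Module k L]

/-- `[r₁₂, s₁₃]` -/
noncomputable def c1213 (β : L →ₗ[k] L →ₗ[k] L) (α : L →ₗ[k] L) :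
    (L ⊗[k] L) ⊗[k] (L ⊗[k] L) →ₗ[k] L ⊗[k] (L ⊗[k] L) :=
  (TensorProduct.map (TensorProduct.lift β) (TensorProduct.map α α)) ∘ₗ
    (TensorProduct.tensorTensorTensorComm k L L L L).toLinearMap

/-- `[r₁₂, s₂₃]` -/
noncomputable def c1223 (β : L →ₗ[k] L →ₗ[k] L) (α : L →ₗ[k] L) :
    (L ⊗[k] L) ⊗[k] (L ⊗[k] L) →ₗ[k] L ⊗[k] (L ⊗[k] L) :=
  (TensorProduct.map α ((TensorProduct.map (TensorProduct.lift β) α) ∘ₗ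
      (TensorProduct.assoc k L L L).symm.toLinearMap)) ∘ₗ
    (TensorProduct.assoc k L L (L ⊗[k] L)).toLinearMap

/-- `[r₁₃, s₂₃]` -/
noncomputable def c1323 (β : L →ₗ[k] L →ₗ[k] L) (α : L →ₗ[k] L) :
    (L ⊗[k] L) ⊗[k] (L ⊗[k] L) →ₗ[k] L ⊗[k] (L ⊗[k] L) :=
  (TensorProduct.assoc k L L L).toLinearMap ∘ₗ
    (TensorProduct.map (TensorProduct.map α α) (TensorProduct.lift β)) ∘ₗ
    (TensorProduct.tensorTensorTensorComm k L L L L).toLinearMap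

/-- `[[r,s]]^α = [r₁₂,s₁₃] + [r₁₂,s₂₃] + [r₁₃,s₂₃]` -/
noncomputable def chybe (β : L →ₗ[k] L →ₗ[k] L) (α : L →ₗ[k] L) (r s : L ⊗[k] L) :
    L ⊗[k] (L ⊗[k] L) :=
  c1213 β α (r ⊗ₜ s) + c1223 β α (r ⊗ₜ s) + c1323 β α (r ⊗ₜ s)

/-- `ad_x` on `L ⊗ L`. -/
noncomputable def adT2 (β : L →ₗ[k] L →ₗ[k] L) (α : L →ₗ[k] L) (x : L) :
    L ⊗[k] L →ₗ[k] L ⊗[k] L :=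
  TensorProduct.map (β x) α + TensorProduct.map α (β x)

/-- `ad_x` on `L ⊗ L ⊗ L`. -/
noncomputable def adT3 (β : L →ₗ[k] L →ₗ[k] L) (α : L →ₗ[k] L) (x : L) :
    L ⊗[k] (L ⊗[k] L) →ₗ[k] L ⊗[k] (L ⊗[k] L) :=
  TensorProduct.map (β x) (TensorProduct.map α α) +
    TensorProduct.map α (TensorProduct.map (β x) α) +
    TensorProduct.map α (TensorProduct.map α (β x))

/-- the cyclic permutation on `L ⊗ L ⊗ L`, `x⊗y⊗z ↦ z⊗x⊗y`. -/
noncomputable def cyc : L ⊗[k] (L ⊗[k] L) →ₗ[k] L ⊗[k] (L ⊗[k] L) :=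
  (TensorProduct.comm k (L ⊗[k] L) L).toLinearMap ∘ₗ
    (TensorProduct.assoc k L L L).symm.toLinearMap

/-- the cyclic sum `↻` on `L ⊗ L ⊗ L`. -/
noncomputable def cycSum : L ⊗[k] (L ⊗[k] L) →ₗ[k] L ⊗[k] (L ⊗[k] L) :=
  LinearMap.id + cyc + cyc ∘ₗ cyc

/-- `Δ = ad(r) : x ↦ ad_x(r)` as a linear map. -/
noncomputable def adr (β : L →ₗ[k] L →ₗ[k] L) (α : L →ₗ[k] L) (r : L ⊗[k] L) :
    L →ₗ[k] L ⊗[k] L where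
  toFun x := adT2 β α x r
  map_add' x y := by
    simp only [adT2, map_add, TensorProduct.map_add_left, TensorProduct.map_add_right,
      LinearMap.add_apply]
    abel
  map_smul' c x := by
    simp only [adT2, map_smul, TensorProduct.map_smul_left, TensorProduct.map_smul_right,
      LinearMap.add_apply, LinearMap.smul_apply, RingHom.id_apply, smul_add]

/-- Hom-Lie algebra axioms. -/
def IsHomLie (β : L →ₗ[k] L →ₗ[k] L) (α : L →ₗ[k] L) : Prop :=
  (∀ x y, β x y = - β y x) ∧
  (∀ x y, α (β x y) = β (α x) (α y)) ∧
  (∀ x y z, β (β x y) (α z) + β (β z x) (α y) + β (β y z) (α x) = 0)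

/-- Hom-Lie coalgebra axioms. -/
def IsHomLieCoalg (Δ : L →ₗ[k] L ⊗[k] L) (α : L →ₗ[k] L) : Prop :=
  (∀ x, Δ (α x) = TensorProduct.map α α (Δ x)) ∧
  (∀ x, TensorProduct.comm k L L (Δ x) = - Δ x) ∧
  (∀ x, cycSum (TensorProduct.map α Δ (Δ x)) = 0)

/-- Hom-Lie bialgebra axioms. -/
def IsHomLieBialg (β : L →ₗ[k] L →ₗ[k] L) (Δ : L →ₗ[k] L ⊗[k] L) (α : L →ₗ[k] L) : Prop :=
  IsHomLie β α ∧ IsHomLieCoalg Δ α ∧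
  (∀ x y, Δ (β x y) = adT2 β α (α x) (Δ y) - adT2 β α (α y) (Δ x))

/-! ### `sl(2,ℂ)` realized on `Fin 3 → ℂ` with basis `H = e₀`, `X₊ = e₁`, `X₋ = e₂`. -/

/-- `H`. -/
noncomputable def slH : Fin 3 → ℂ := Pi.single 0 1
/-- `X₊`. -/
noncomputable def slXp : Fin 3 → ℂ := Pi.single 1 1
/-- `X₋`. -/
noncomputable def slXm : Fin 3 → ℂ := Pi.single 2 1

/-- the `sl(2)` bracket: `[X₊,X₋] = H`, `[H,X₊] = 2X₊`, `[H,X₋] = -2X₋`-/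
noncomputable def slBr : (Fin 3 → ℂ) →ₗ[ℂ] (Fin 3 → ℂ) →ₗ[ℂ] (Fin 3 → ℂ) :=
  LinearMap.mk₂ ℂ
    (fun u v => ![u 1 * v 2 - u 2 * v 1, 2 * (u 0 * v 1 - u 1 * v 0),
      -2 * (u 0 * v 2 - u 2 * v 0)])
    (by intro u u' v; funext i; fin_cases i <;> simp <;> ring)
    (by intro c u v; funext i; fin_cases i <;> simp <;> ring)
    (by intro u v v'; funext i; fin_cases i <;> simp <;> ring)
    (by intro c u v; funext i; fin_cases i <;> simp <;> ring)

/-- the standard cobracket of `sl(2)`: `Δ(H) = 0`, `Δ(X±) = (1/2)(X± ⊗ H − H ⊗ X±)`. -/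
noncomputable def slCobr : (Fin 3 → ℂ) →ₗ[ℂ] (Fin 3 → ℂ) ⊗[ℂ] (Fin 3 → ℂ) :=
  (Pi.basisFun ℂ (Fin 3)).constr ℂ
    ![0, (1 / 2 : ℂ) • (slXp ⊗ₜ slH - slH ⊗ₜ slXp),
      (1 / 2 : ℂ) • (slXm ⊗ₜ slH - slH ⊗ₜ slXm)]

/-- the Lie bialgebra endomorphism of `sl(2)` determined by `b`:
`α(H) = H`, `α(X₊) = b X₊`, `α(X₋) = b⁻¹ X₋`. -/
noncomputable def slAlpha (b : ℂ) : (Fin 3 → ℂ) →ₗ[ℂ] (Fin 3 → ℂ) :=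
  (Pi.basisFun ℂ (Fin 3)).constr ℂ ![slH, b • slXp, b⁻¹ • slXm]

/-- the standard classical `r`-matrix `r = X₊ ⊗ X₋ + (1/4) H ⊗ H` of `sl(2)`. -/
noncomputable def slR : (Fin 3 → ℂ) ⊗[ℂ] (Fin 3 → ℂ) :=
  slXp ⊗ₜ slXm + (1 / 4 : ℂ) • (slH ⊗ₜ slH)

/-! The cobracket is `Δ v = ½ (v ⊗ H - H ⊗ v)`, with kernel `ℂ H`, so an isomorphism `γ` of the
twisted bialgebras sends `H` to some `c • H`. Compatibility with the twists makes `g = γ X₊` an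
eigenvector of `α_{b'}` with eigenvalue `b`; with this, compatibility with the bracket at `(H, X₊)`
gives `2 g = c [H, g]`, and compatibility with `Δ` at `X₊` gives `Δ g = c Δ g`. So the
`X₋`-coordinate of `g` equals both `c` and `-c` times itself and vanishes, as does its
`H`-coordinate: `g ∈ ℂ X₊`, where `α_{b'}` acts by `b'`, hence `b = b'`. -/

lemma slAlpha_apply (b : ℂ) (v : Fin 3 → ℂ) :
    slAlpha b v = ![v 0, b * v 1, b⁻¹ * v 2] := by
  funext i
  fin_cases i <;>
    simp [slAlpha, Module.Basis.constr_apply_fintype, Fin.sum_univ_three, slH, slXp, slXm, mul_comm]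

lemma slAlpha_slH (b : ℂ) : slAlpha b slH = slH := by
  simp [slAlpha, slH]

lemma slAlpha_slXp (b : ℂ) : slAlpha b slXp = b • slXp := by
  simp [slAlpha, slXp]

lemma slAlpha_slBr {b : ℂ} (hb : b ≠ 0) (x y : Fin 3 → ℂ) :
    slAlpha b (slBr x y) = slBr (slAlpha b x) (slAlpha b y) := by
  funext i
  fin_cases i <;> simp [slAlpha_apply, slBr] <;> field_simp

lemma slBr_slH_apply (v : Fin 3 → ℂ) : slBr slH v = ![0, 2 * v 1, -2 * v 2] := by
  funext i
  fin_cases i <;> simp [slBr, slH]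

lemma slBr_slH_slXp : slBr slH slXp = (2 : ℂ) • slXp := by
  funext i
  fin_cases i <;> simp [slBr_slH_apply, slXp]

lemma slCobr_apply (v : Fin 3 → ℂ) : slCobr v = (1 / 2 : ℂ) • (v ⊗ₜ slH - slH ⊗ₜ v) := by
  have : slCobr = (1 / 2 : ℂ) • ((TensorProduct.mk ℂ _ _).flip slH - TensorProduct.mk ℂ _ _ slH) :=
    (Pi.basisFun ℂ (Fin 3)).ext fun i => by
      fin_cases i <;> simp [slCobr, slH, slXp, slXm]
  rw [this]
  rfl

lemma eq_smul_slH {v : Fin 3 → ℂ} (h1 : v 1 = 0) (h2 : v 2 = 0) : v = v 0 • slH := by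
  funext i
  fin_cases i <;> simp [slH, h1, h2]

lemma slCobr_eq_zero_iff (v : Fin 3 → ℂ) : slCobr v = 0 ↔ v 1 = 0 ∧ v 2 = 0 := by
  have coeff (i : Fin 3) (h : slCobr v = 0) : v i * slH 0 - slH i * v 0 = 0 := by
    simpa [slCobr_apply] using
      congrArg (LinearMap.mul' ℂ ℂ ∘ₗ TensorProduct.map (LinearMap.proj i) (LinearMap.proj 0)) h
  refine ⟨fun h => ⟨by simpa [slH] using coeff 1 h, by simpa [slH] using coeff 2 h⟩, ?_⟩
  rintro ⟨h1, h2⟩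
  rw [slCobr_apply, eq_smul_slH h1 h2, smul_tmul, sub_self, smul_zero]

lemma slXp_ne_zero : slXp ≠ 0 := Pi.single_ne_zero_iff.mpr one_ne_zero

lemma eq_smul_slXp_of_slBr_slH_of_slCobr {g : Fin 3 → ℂ} {c : ℂ}
    (hbr : (2 : ℂ) • g = c • slBr slH g) (hco : slCobr g = c • slCobr g) : g = g 1 • slXp := by
  have hbr0 := congrFun hbr 0
  have hbr2 := congrFun hbr 2
  simp only [slBr_slH_apply, Pi.smul_apply, smul_eq_mul, Matrix.cons_val] at hbr0 hbr2
  have hco2 : (1 - c) * g 2 = 0 := by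
    have : slCobr ((1 - c) • g) = 0 := by
      rw [sub_smul, one_smul, map_sub, map_smul, ← hco, sub_self]
    simpa using ((slCobr_eq_zero_iff _).mp this).2
  have hg0 : g 0 = 0 := by linear_combination hbr0 / 2
  have hg2 : g 2 = 0 := by linear_combination (hbr2 + 2 * hco2) / 4
  funext i
  fin_cases i <;> simp [slXp, hg0, hg2]

lemma eq_of_sl2_twist_iso {b b' : ℂ} (hb : b ≠ 0) (hb' : b' ≠ 0)
    (γ : (Fin 3 → ℂ) ≃ₗ[ℂ] (Fin 3 → ℂ))
    (hα : ∀ x, γ (slAlpha b x) = slAlpha b' (γ x))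
    (hbr : ∀ x y, γ (slAlpha b (slBr x y)) = slAlpha b' (slBr (γ x) (γ y)))
    (hco : ∀ x, slCobr (slAlpha b' (γ x)) =
      TensorProduct.map γ.toLinearMap γ.toLinearMap (slCobr (slAlpha b x))) :
    b = b' := by
  obtain ⟨c, hH⟩ : ∃ c : ℂ, γ slH = c • slH := by
    have h := hco slH
    rw [slAlpha_slH, slCobr_apply slH, sub_self, smul_zero, map_zero, slCobr_eq_zero_iff,
      slAlpha_apply] at h
    simp only [Matrix.cons_val, mul_eq_zero, inv_eq_zero, hb', false_or] at h
    exact ⟨γ slH 0, eq_smul_slH h.1 h.2⟩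
  set g := γ slXp
  have hg : slAlpha b' g = b • g := by rw [← hα, slAlpha_slXp, map_smul]
  have hgbr : (2 : ℂ) • g = c • slBr slH g := by
    refine smul_right_injective _ hb ?_
    calc b • (2 : ℂ) • g = γ (slBr (slAlpha b slH) (slAlpha b slXp)) := by
          rw [slAlpha_slH, slAlpha_slXp, map_smul, slBr_slH_slXp, map_smul, map_smul]
      _ = slBr (slAlpha b' (γ slH)) (slAlpha b' g) := by
        rw [← slAlpha_slBr hb, hbr, slAlpha_slBr hb']
      _ = b • c • slBr slH g := by
        rw [hH, map_smul, slAlpha_slH, hg, map_smul, map_smul, LinearMap.smul_apply, smul_comm]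
  have hgco : slCobr g = c • slCobr g := by
    refine smul_right_injective _ hb ?_
    calc b • slCobr g = slCobr (slAlpha b' g) := by rw [hg, map_smul]
      _ = TensorProduct.map γ.toLinearMap γ.toLinearMap (b • slCobr slXp) := by
        rw [hco, slAlpha_slXp, map_smul]
      _ = b • c • slCobr g := by
        rw [slCobr_apply, slCobr_apply, map_smul, map_smul, map_sub, TensorProduct.map_tmul,
          TensorProduct.map_tmul]
        simp only [LinearEquiv.coe_coe, hH, tmul_smul, smul_tmul', smul_sub, smul_comm c]
        rfl
  have hg1 : g 1 ≠ 0 := by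
    intro h
    have : g = 0 := by rw [eq_smul_slXp_of_slBr_slH_of_slCobr hgbr hgco, h, zero_smul]
    exact slXp_ne_zero (γ.map_eq_zero_iff.mp this)
  simpa [slAlpha_apply, hg1, eq_comm] using congrFun hg 1

/-- the Hom-Lie bialgebras `sl(2)_α` and `sl(2)_β` attached to
non-zero scalars `b` and `b'` are isomorphic iff `b = b'`. -/
theorem stmt11 (b b' : ℂ) (hb : b ≠ 0) (hb' : b' ≠ 0) :
    (∃ γ : (Fin 3 → ℂ) ≃ₗ[ℂ] (Fin 3 → ℂ),
        (∀ x, γ (slAlpha b x) = slAlpha b' (γ x)) ∧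
        (∀ x y, γ ((LinearMap.compr₂ slBr (slAlpha b)) x y) =
          (LinearMap.compr₂ slBr (slAlpha b')) (γ x) (γ y)) ∧
        (∀ x, (slCobr ∘ₗ slAlpha b') (γ x) =
          TensorProduct.map (γ : (Fin 3 → ℂ) →ₗ[ℂ] (Fin 3 → ℂ))
            (γ : (Fin 3 → ℂ) →ₗ[ℂ] (Fin 3 → ℂ)) ((slCobr ∘ₗ slAlpha b) x)))
    ↔ b = b' := by
  refine ⟨fun ⟨γ, hα, hbr, hco⟩ => eq_of_sl2_twist_iso hb hb' γ hα hbr hco, ?_⟩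
  rintro rfl
  exact ⟨LinearEquiv.refl ℂ _, fun _ => rfl, fun _ _ => rfl, fun _ => by simp⟩
end

section
/- Let (L,[-,-],α) be a Hom-Lie algebra and r ∈ L⊗L with (α⊗α)(r) = r, τ(r) = −r, and [[r,r]]^α = 0. Then (L,[-,-],ad(r),α,r) is a quasi-triangular Hom-Lie bialgebra. -/
open TensorProduct

variable {k : Type*} [Field k]
variable {L : Type*} [AddCommGroup L] [Module k L]

noncomputable section StmtAux

open TensorProduct LinearMap

variable {k : Type*} [Field k]
variable {L : Type*} [AddCommGroup L] [Module k L]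

/-- weave `(a⊗b)⊗(c⊗d) ↦ f a ⊗ (g b c ⊗ h d)` -/
noncomputable def gg1 (f : L →ₗ[k] L) (g : L →ₗ[k] L →ₗ[k] L) (h : L →ₗ[k] L) :
    (L ⊗[k] L) ⊗[k] (L ⊗[k] L) →ₗ[k] L ⊗[k] (L ⊗[k] L) :=
  (TensorProduct.map f (TensorProduct.map (TensorProduct.lift g) h)) ∘ₗ
    (TensorProduct.map LinearMap.id (TensorProduct.assoc k L L L).symm.toLinearMap) ∘ₗ
    (TensorProduct.assoc k L L (L ⊗[k] L)).toLinearMap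

@[simp] lemma gg1_tmul (f : L →ₗ[k] L) (g : L →ₗ[k] L →ₗ[k] L) (h : L →ₗ[k] L)
    (a b c d : L) :
    gg1 f g h ((a ⊗ₜ[k] b) ⊗ₜ[k] (c ⊗ₜ[k] d)) = f a ⊗ₜ[k] (g b c ⊗ₜ[k] h d) := by
  simp [gg1, TensorProduct.assoc_tmul, TensorProduct.assoc_symm_tmul]

/-- weave `(a⊗b)⊗(c⊗d) ↦ f a ⊗ (h c ⊗ g b d)` -/
noncomputable def gg2 (f h : L →ₗ[k] L) (g : L →ₗ[k] L →ₗ[k] L) :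
    (L ⊗[k] L) ⊗[k] (L ⊗[k] L) →ₗ[k] L ⊗[k] (L ⊗[k] L) :=
  (TensorProduct.map f (TensorProduct.map h (TensorProduct.lift g))) ∘ₗ
    (TensorProduct.assoc k L L (L ⊗[k] L)).toLinearMap ∘ₗ
    (TensorProduct.tensorTensorTensorComm k L L L L).toLinearMap

@[simp] lemma gg2_tmul (f h : L →ₗ[k] L) (g : L →ₗ[k] L →ₗ[k] L)
    (a b c d : L) :
    gg2 f h g ((a ⊗ₜ[k] b) ⊗ₜ[k] (c ⊗ₜ[k] d)) = f a ⊗ₜ[k] (h c ⊗ₜ[k] g b d) := by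
  simp [gg2, TensorProduct.assoc_tmul, TensorProduct.tensorTensorTensorComm_tmul]

/-- weave `(a⊗b)⊗(c⊗d) ↦ g a c ⊗ (f b ⊗ h d)` -/
noncomputable def gg3 (g : L →ₗ[k] L →ₗ[k] L) (f h : L →ₗ[k] L) :
    (L ⊗[k] L) ⊗[k] (L ⊗[k] L) →ₗ[k] L ⊗[k] (L ⊗[k] L) :=
  (TensorProduct.map (TensorProduct.lift g) (TensorProduct.map f h)) ∘ₗ
    (TensorProduct.tensorTensorTensorComm k L L L L).toLinearMap

@[simp] lemma gg3_tmul (g : L →ₗ[k] L →ₗ[k] L) (f h : L →ₗ[k] L)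
    (a b c d : L) :
    gg3 g f h ((a ⊗ₜ[k] b) ⊗ₜ[k] (c ⊗ₜ[k] d)) = g a c ⊗ₜ[k] (f b ⊗ₜ[k] h d) := by
  simp [gg3, TensorProduct.tensorTensorTensorComm_tmul]

noncomputable def sw1 : (L ⊗[k] L) ⊗[k] (L ⊗[k] L) →ₗ[k] (L ⊗[k] L) ⊗[k] (L ⊗[k] L) :=
  TensorProduct.map (TensorProduct.comm k L L).toLinearMap LinearMap.id

noncomputable def sw2 : (L ⊗[k] L) ⊗[k] (L ⊗[k] L) →ₗ[k] (L ⊗[k] L) ⊗[k] (L ⊗[k] L) :=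
  TensorProduct.map LinearMap.id (TensorProduct.comm k L L).toLinearMap

noncomputable def swE : (L ⊗[k] L) ⊗[k] (L ⊗[k] L) →ₗ[k] (L ⊗[k] L) ⊗[k] (L ⊗[k] L) :=
  (TensorProduct.comm k (L ⊗[k] L) (L ⊗[k] L)).toLinearMap

@[simp] lemma sw1_tmul (u v : L ⊗[k] L) : (sw1 (k := k) (L := L)) (u ⊗ₜ[k] v) =
    (TensorProduct.comm k L L) u ⊗ₜ[k] v := by simp [sw1]
@[simp] lemma sw2_tmul (u v : L ⊗[k] L) : (sw2 (k := k) (L := L)) (u ⊗ₜ[k] v) =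
    u ⊗ₜ[k] (TensorProduct.comm k L L) v := by simp [sw2]
@[simp] lemma swE_tmul (u v : L ⊗[k] L) : (swE (k := k) (L := L)) (u ⊗ₜ[k] v) =
    v ⊗ₜ[k] u := by simp [swE]

@[simp] lemma cyc_tmul (a b c : L) :
    (cyc (k := k) (L := L)) (a ⊗ₜ[k] (b ⊗ₜ[k] c)) = c ⊗ₜ[k] (a ⊗ₜ[k] b) := by
  simp [cyc, TensorProduct.assoc_symm_tmul]

lemma ext_L3 {T : Type*} [AddCommGroup T] [Module k T]
    {F G : L ⊗[k] (L ⊗[k] L) →ₗ[k] T}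
    (h : ∀ a b c : L, F (a ⊗ₜ[k] (b ⊗ₜ[k] c)) = G (a ⊗ₜ[k] (b ⊗ₜ[k] c))) : F = G := by
  apply TensorProduct.ext'
  intro a w
  induction w using TensorProduct.induction_on with
  | zero => simp
  | tmul b c => exact h a b c
  | add u v hu hv => rw [tmul_add, map_add, map_add, hu, hv]

lemma cyc3 (w : L ⊗[k] (L ⊗[k] L)) :
    (cyc (k := k) (L := L)) (cyc ((cyc (k := k) (L := L)) w)) = w := by
  have h : (cyc (k := k) (L := L)) ∘ₗ cyc ∘ₗ cyc = LinearMap.id := by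
    apply ext_L3; intro a b c; simp
  simpa using LinearMap.congr_fun h w

variable (β : L →ₗ[k] L →ₗ[k] L) (α : L →ₗ[k] L) (x : L)

@[simp] lemma adT2_tmul (a b : L) :
    adT2 β α x (a ⊗ₜ[k] b) = β x a ⊗ₜ[k] α b + α a ⊗ₜ[k] β x b := by
  simp [adT2]

@[simp] lemma adT3_tmul (a b c : L) :
    adT3 β α x (a ⊗ₜ[k] (b ⊗ₜ[k] c)) =
      β x a ⊗ₜ[k] (α b ⊗ₜ[k] α c) + α a ⊗ₜ[k] (β x b ⊗ₜ[k] α c) +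
        α a ⊗ₜ[k] (α b ⊗ₜ[k] β x c) := by
  simp [adT3]

@[simp] lemma c1213_tmul (a b c d : L) :
    c1213 β α ((a ⊗ₜ[k] b) ⊗ₜ[k] (c ⊗ₜ[k] d)) = β a c ⊗ₜ[k] (α b ⊗ₜ[k] α d) := by
  simp [c1213, TensorProduct.tensorTensorTensorComm_tmul]

@[simp] lemma c1223_tmul (a b c d : L) :
    c1223 β α ((a ⊗ₜ[k] b) ⊗ₜ[k] (c ⊗ₜ[k] d)) = α a ⊗ₜ[k] (β b c ⊗ₜ[k] α d) := by
  simp [c1223, TensorProduct.assoc_tmul, TensorProduct.assoc_symm_tmul]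

@[simp] lemma c1323_tmul (a b c d : L) :
    c1323 β α ((a ⊗ₜ[k] b) ⊗ₜ[k] (c ⊗ₜ[k] d)) = α a ⊗ₜ[k] (α c ⊗ₜ[k] β b d) := by
  simp [c1323, TensorProduct.assoc_tmul, TensorProduct.tensorTensorTensorComm_tmul]

@[simp] lemma adr_apply (r : L ⊗[k] L) : adr β α r x = adT2 β α x r := rfl

/- the nine components of `adT3 (α x) (chybe r s)` -/
noncomputable def P01 := gg3 (β.compr₂ (β (α x))) (α ∘ₗ α) (α ∘ₗ α)
noncomputable def P11 := gg3 (β.compr₂ α) (β (α x) ∘ₗ α) (α ∘ₗ α)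
noncomputable def P21 := gg3 (β.compr₂ α) (α ∘ₗ α) (β (α x) ∘ₗ α)
noncomputable def P02 := gg1 (β (α x) ∘ₗ α) (β.compr₂ α) (α ∘ₗ α)
noncomputable def P12 := gg1 (α ∘ₗ α) (β.compr₂ (β (α x))) (α ∘ₗ α)
noncomputable def P22 := gg1 (α ∘ₗ α) (β.compr₂ α) (β (α x) ∘ₗ α)
noncomputable def P03 := gg2 (β (α x) ∘ₗ α) (α ∘ₗ α) (β.compr₂ α)
noncomputable def P13 := gg2 (α ∘ₗ α) (β (α x) ∘ₗ α) (β.compr₂ α)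
noncomputable def P23 := gg2 (α ∘ₗ α) (α ∘ₗ α) (β.compr₂ (β (α x)))

/- the four pieces of `(α ⊗ Δ)(Δ x)` and the two remainder terms -/
noncomputable def FU1 := gg1 (α ∘ₗ β x) (β ∘ₗ α) α
noncomputable def FU2 := gg2 (α ∘ₗ β x) α (β ∘ₗ α)
noncomputable def FU3 := gg1 (α ∘ₗ α) (β ∘ₗ β x) α
noncomputable def FU4 := gg2 (α ∘ₗ α) α (β ∘ₗ β x)
noncomputable def FS := gg1 (α ∘ₗ α) ((β ∘ₗ α).compl₂ (β x)) (α ∘ₗ α)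
noncomputable def FS' := gg2 (α ∘ₗ α) (α ∘ₗ α) ((β ∘ₗ α).compl₂ (β x))

section Identities


lemma mI1 (h2 : ∀ u v : L, α (β u v) = β (α u) (α v)) : FU1 β α x ∘ₗ TensorProduct.map LinearMap.id (TensorProduct.map α α)
    = P02 β α x := by
  apply TensorProduct.ext_fourfold'
  intro a b c d
  simp [FU1, P02, h2]

lemma mI2 (h2 : ∀ u v : L, α (β u v) = β (α u) (α v)) : FU2 β α x ∘ₗ TensorProduct.map LinearMap.id (TensorProduct.map α α)
    = P03 β α x := by
  apply TensorProduct.ext_fourfold'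
  intro a b c d
  simp [FU2, P03, h2]

lemma mI3 (hleib : ∀ u v w : L, β (β u v) (α w) = β (α u) (β v w) - β (α v) (β u w)) : FU3 β α x ∘ₗ TensorProduct.map LinearMap.id (TensorProduct.map α α)
    = P12 β α x - FS β α x := by
  apply TensorProduct.ext_fourfold'
  intro a b c d
  simp only [LinearMap.comp_apply, LinearMap.sub_apply, TensorProduct.map_tmul,
    LinearMap.id_coe, id_eq, gg1_tmul, gg2_tmul, LinearMap.compr₂_apply,
    LinearMap.compl₂_apply, FU3, P12, FS]
  rw [hleib x b c]
  simp [TensorProduct.sub_tmul, TensorProduct.tmul_sub]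

lemma mI4 (hleib : ∀ u v w : L, β (β u v) (α w) = β (α u) (β v w) - β (α v) (β u w)) : FU4 β α x ∘ₗ TensorProduct.map LinearMap.id (TensorProduct.map α α)
    = P23 β α x - FS' β α x := by
  apply TensorProduct.ext_fourfold'
  intro a b c d
  simp only [LinearMap.comp_apply, LinearMap.sub_apply, TensorProduct.map_tmul,
    LinearMap.id_coe, id_eq, gg1_tmul, gg2_tmul, LinearMap.compr₂_apply,
    LinearMap.compl₂_apply, FU4, P23, FS']
  rw [hleib x b d]
  simp [TensorProduct.sub_tmul, TensorProduct.tmul_sub]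

lemma mO1 (h1 : ∀ u v : L, β u v = -β v u) : cyc ∘ₗ P02 β α x = -(P13 β α x ∘ₗ swE ∘ₗ sw2) := by
  apply TensorProduct.ext_fourfold'
  intro a b c d
  simp only [LinearMap.comp_apply, LinearMap.neg_apply, sw2_tmul, swE_tmul,
    TensorProduct.comm_tmul, P02, P13, gg1_tmul, gg2_tmul, cyc_tmul,
    LinearMap.compr₂_apply]
  rw [h1 c b]
  simp [TensorProduct.tmul_neg, TensorProduct.neg_tmul]

lemma mO2 : cyc ∘ₗ P13 β α x = P21 β α x ∘ₗ sw1 ∘ₗ sw2 := by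
  apply TensorProduct.ext_fourfold'
  intro a b c d
  simp [P13, P21]

lemma mO3 : cyc ∘ₗ P03 β α x = P11 β α x ∘ₗ sw1 ∘ₗ sw2 := by
  apply TensorProduct.ext_fourfold'
  intro a b c d
  simp [P03, P11]

lemma mO4 (h1 : ∀ u v : L, β u v = -β v u) : cyc ∘ₗ P11 β α x = -(P22 β α x ∘ₗ swE ∘ₗ sw2) := by
  apply TensorProduct.ext_fourfold'
  intro a b c d
  simp only [LinearMap.comp_apply, LinearMap.neg_apply, sw2_tmul, swE_tmul,
    TensorProduct.comm_tmul, P11, P22, gg3_tmul, gg1_tmul, cyc_tmul,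
    LinearMap.compr₂_apply]
  rw [h1 c a]
  simp [TensorProduct.tmul_neg, TensorProduct.neg_tmul]

lemma mO5 (h1 : ∀ u v : L, β u v = -β v u) : cyc ∘ₗ P12 β α x = -(P23 β α x ∘ₗ swE ∘ₗ sw2) := by
  apply TensorProduct.ext_fourfold'
  intro a b c d
  simp only [LinearMap.comp_apply, LinearMap.neg_apply, sw2_tmul, swE_tmul,
    TensorProduct.comm_tmul, P12, P23, gg1_tmul, gg2_tmul, cyc_tmul,
    LinearMap.compr₂_apply]
  rw [h1 c b]
  simp [TensorProduct.tmul_neg, TensorProduct.neg_tmul]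

lemma mO6 : cyc ∘ₗ P23 β α x = P01 β α x ∘ₗ sw1 ∘ₗ sw2 := by
  apply TensorProduct.ext_fourfold'
  intro a b c d
  simp [P23, P01]

lemma mN11 (h1 : ∀ u v : L, β u v = -β v u) (hleib : ∀ u v w : L, β (β u v) (α w) = β (α u) (β v w) - β (α v) (β u w)) : P01 β α x ∘ₗ sw1 ∘ₗ sw2
    = -(cyc ∘ₗ cyc ∘ₗ FS β α x ∘ₗ swE ∘ₗ sw1) + cyc ∘ₗ FS' β α x := by
  apply TensorProduct.ext_fourfold'
  intro a b c d
  have e : β (α x) (β b d) = -(β (α d) (β x b)) + β (α b) (β x d) := by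
    have l := (hleib x b d).symm
    rw [sub_eq_iff_eq_add] at l
    rw [l, h1 (β x b) (α d)]
  simp only [LinearMap.comp_apply, LinearMap.neg_apply, LinearMap.add_apply,
    sw1_tmul, sw2_tmul, swE_tmul, TensorProduct.comm_tmul, P01, FS, FS',
    gg3_tmul, gg1_tmul, gg2_tmul, LinearMap.compr₂_apply, LinearMap.compl₂_apply,
    cyc_tmul]
  rw [e]
  simp [TensorProduct.add_tmul, TensorProduct.neg_tmul]

lemma mch1 : adT3 β α (α x) ∘ₗ c1213 β α = P01 β α x + P11 β α x + P21 β α x := by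
  apply TensorProduct.ext_fourfold'
  intro a b c d
  simp [P01, P11, P21]

lemma mch2 : adT3 β α (α x) ∘ₗ c1223 β α = P02 β α x + P12 β α x + P22 β α x := by
  apply TensorProduct.ext_fourfold'
  intro a b c d
  simp [P02, P12, P22]

lemma mch3 : adT3 β α (α x) ∘ₗ c1323 β α = P03 β α x + P13 β α x + P23 β α x := by
  apply TensorProduct.ext_fourfold'
  intro a b c d
  simp [P03, P13, P23]

lemma hA : ∀ (a b : L) (t : L ⊗[k] L),
    (FU1 β α x + FU2 β α x + FU3 β α x + FU4 β α x) ((a ⊗ₜ[k] b) ⊗ₜ[k] t)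
      = α (β x a) ⊗ₜ[k] adT2 β α (α b) t + α (α a) ⊗ₜ[k] adT2 β α (β x b) t := by
  intro a b t
  induction t using TensorProduct.induction_on with
  | zero => simp
  | tmul c d =>
    simp [FU1, FU2, FU3, FU4, TensorProduct.tmul_add]
    abel
  | add u v hu hv =>
    rw [TensorProduct.tmul_add, map_add, hu, hv]
    simp only [map_add, TensorProduct.tmul_add]
    abel

lemma hUgen : ∀ s t : L ⊗[k] L,
    TensorProduct.map α (adr β α t) (adT2 β α x s)
      = (FU1 β α x + FU2 β α x + FU3 β α x + FU4 β α x) (s ⊗ₜ[k] t) := by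
  intro s t
  induction s using TensorProduct.induction_on with
  | zero => simp
  | tmul a b =>
    rw [hA β α x a b t]
    simp [TensorProduct.tmul_add]
  | add u v hu hv =>
    rw [map_add, map_add, TensorProduct.add_tmul, map_add, hu, hv]

lemma malpha (h2 : ∀ u v : L, α (β u v) = β (α u) (α v)) : adT2 β α (α x) ∘ₗ TensorProduct.map α α
    = TensorProduct.map α α ∘ₗ adT2 β α x := by
  apply TensorProduct.ext'
  intro a b
  simp [h2]

lemma mcomm : (TensorProduct.comm k L L).toLinearMap ∘ₗ adT2 β α x
    = adT2 β α x ∘ₗ (TensorProduct.comm k L L).toLinearMap := by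
  apply TensorProduct.ext'
  intro a b
  simp
  abel

lemma mcompat (h2 : ∀ u v : L, α (β u v) = β (α u) (α v)) (hleib : ∀ u v w : L, β (β u v) (α w) = β (α u) (β v w) - β (α v) (β u w)) (y : L) : adT2 β α (β x y) ∘ₗ TensorProduct.map α α
    = adT2 β α (α x) ∘ₗ adT2 β α y - adT2 β α (α y) ∘ₗ adT2 β α x := by
  apply TensorProduct.ext'
  intro a b
  simp only [LinearMap.comp_apply, LinearMap.sub_apply, TensorProduct.map_tmul,
    adT2_tmul, map_add, h2]
  rw [hleib x y a, hleib x y b]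
  simp only [TensorProduct.sub_tmul, TensorProduct.tmul_sub, h2]
  abel

end Identities

end StmtAux


/-- if `(α⊗α)(r) = r`, `τ(r) = -r` and `r` satisfies the CHYBE, then
`(L, [-,-], ad(r), α, r)` is a quasi-triangular Hom-Lie bialgebra. -/
theorem stmt15 {k : Type*} [Field k] [CharZero k] {L : Type*} [AddCommGroup L] [Module k L]
    (β : L →ₗ[k] L →ₗ[k] L) (α : L →ₗ[k] L) (h : IsHomLie β α)
    (r : L ⊗[k] L) (hr : TensorProduct.map α α r = r)
    (hanti : TensorProduct.comm k L L r = - r)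
    (hchybe : chybe β α r r = 0) :
    IsHomLieBialg β (adr β α r) α := by
  obtain ⟨h1, h2, h3⟩ := h
  have hleib : ∀ u v w : L, β (β u v) (α w) = β (α u) (β v w) - β (α v) (β u w) := by
    intro u v w
    have j := h3 u v w
    have t1 : β (β w u) (α v) = -(β (β u w) (α v)) := by
      rw [h1 w u, map_neg, LinearMap.neg_apply]
    have t2 : β (β v w) (α u) = -(β (α u) (β v w)) := h1 _ _
    have t3 : β (β u w) (α v) = -(β (α v) (β u w)) := h1 _ _
    rw [t1, t3, t2] at j
    refine sub_eq_zero.mp ?_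
    rw [← j]; abel
  refine ⟨⟨h1, h2, h3⟩, ⟨?_, ?_, ?_⟩, ?_⟩
  · -- Δ ∘ α = (α ⊗ α) ∘ Δ
    intro x
    have hc := LinearMap.congr_fun (malpha β α x h2) r
    simp only [LinearMap.comp_apply] at hc
    rw [hr] at hc
    simpa using hc
  · -- co-antisymmetry
    intro x
    have hc := LinearMap.congr_fun (mcomm β α x) r
    simp only [LinearMap.comp_apply, LinearEquiv.coe_coe] at hc
    rw [hanti, map_neg] at hc
    simpa using hc
  · -- co-Jacobi
    intro x
    have eA2 : (TensorProduct.map LinearMap.id (TensorProduct.map α α))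
        (r ⊗ₜ[k] r) = r ⊗ₜ[k] r := by simp [hr]
    have eswE : (swE (k := k) (L := L)) (r ⊗ₜ[k] r) = r ⊗ₜ[k] r := by simp
    have esw1 : (sw1 (k := k) (L := L)) (r ⊗ₜ[k] r) = -(r ⊗ₜ[k] r) := by
      simp [hanti, TensorProduct.neg_tmul]
    have esw2 : (sw2 (k := k) (L := L)) (r ⊗ₜ[k] r) = -(r ⊗ₜ[k] r) := by
      simp [hanti, TensorProduct.tmul_neg]
    have e1 : FU1 β α x (r ⊗ₜ[k] r) = P02 β α x (r ⊗ₜ[k] r) := by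
      have hc := LinearMap.congr_fun (mI1 β α x h2) (r ⊗ₜ[k] r)
      rwa [LinearMap.comp_apply, eA2] at hc
    have e2 : FU2 β α x (r ⊗ₜ[k] r) = P03 β α x (r ⊗ₜ[k] r) := by
      have hc := LinearMap.congr_fun (mI2 β α x h2) (r ⊗ₜ[k] r)
      rwa [LinearMap.comp_apply, eA2] at hc
    have e3 : FU3 β α x (r ⊗ₜ[k] r) = P12 β α x (r ⊗ₜ[k] r) - FS β α x (r ⊗ₜ[k] r) := by
      have hc := LinearMap.congr_fun (mI3 β α x hleib) (r ⊗ₜ[k] r)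
      rwa [LinearMap.comp_apply, eA2, LinearMap.sub_apply] at hc
    have e4 : FU4 β α x (r ⊗ₜ[k] r) = P23 β α x (r ⊗ₜ[k] r) - FS' β α x (r ⊗ₜ[k] r) := by
      have hc := LinearMap.congr_fun (mI4 β α x hleib) (r ⊗ₜ[k] r)
      rwa [LinearMap.comp_apply, eA2, LinearMap.sub_apply] at hc
    have o1 : cyc (P02 β α x (r ⊗ₜ[k] r)) = P13 β α x (r ⊗ₜ[k] r) := by
      have hc := LinearMap.congr_fun (mO1 β α x h1) (r ⊗ₜ[k] r)
      simp only [LinearMap.comp_apply, LinearMap.neg_apply] at hc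
      simp only [esw2, map_neg, eswE, neg_neg] at hc
      exact hc
    have o2 : cyc (P13 β α x (r ⊗ₜ[k] r)) = P21 β α x (r ⊗ₜ[k] r) := by
      have hc := LinearMap.congr_fun (mO2 β α x) (r ⊗ₜ[k] r)
      simp only [LinearMap.comp_apply] at hc
      simp only [esw2, map_neg, esw1, neg_neg] at hc
      exact hc
    have o3 : cyc (P03 β α x (r ⊗ₜ[k] r)) = P11 β α x (r ⊗ₜ[k] r) := by
      have hc := LinearMap.congr_fun (mO3 β α x) (r ⊗ₜ[k] r)
      simp only [LinearMap.comp_apply] at hc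
      simp only [esw2, map_neg, esw1, neg_neg] at hc
      exact hc
    have o4 : cyc (P11 β α x (r ⊗ₜ[k] r)) = P22 β α x (r ⊗ₜ[k] r) := by
      have hc := LinearMap.congr_fun (mO4 β α x h1) (r ⊗ₜ[k] r)
      simp only [LinearMap.comp_apply, LinearMap.neg_apply] at hc
      simp only [esw2, map_neg, eswE, neg_neg] at hc
      exact hc
    have o5 : cyc (P12 β α x (r ⊗ₜ[k] r)) = P23 β α x (r ⊗ₜ[k] r) := by
      have hc := LinearMap.congr_fun (mO5 β α x h1) (r ⊗ₜ[k] r)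
      simp only [LinearMap.comp_apply, LinearMap.neg_apply] at hc
      simp only [esw2, map_neg, eswE, neg_neg] at hc
      exact hc
    have o6 : cyc (P23 β α x (r ⊗ₜ[k] r)) = P01 β α x (r ⊗ₜ[k] r) := by
      have hc := LinearMap.congr_fun (mO6 β α x) (r ⊗ₜ[k] r)
      simp only [LinearMap.comp_apply] at hc
      simp only [esw2, map_neg, esw1, neg_neg] at hc
      exact hc
    have n11 : P01 β α x (r ⊗ₜ[k] r)
        = cyc (cyc (FS β α x (r ⊗ₜ[k] r))) + cyc (FS' β α x (r ⊗ₜ[k] r)) := by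
      have hc := LinearMap.congr_fun (mN11 β α x h1 hleib) (r ⊗ₜ[k] r)
      simp only [LinearMap.comp_apply, LinearMap.add_apply, LinearMap.neg_apply] at hc
      simp only [esw2, map_neg, esw1, eswE, neg_neg] at hc
      exact hc
    have n23 : P23 β α x (r ⊗ₜ[k] r)
        = cyc (FS β α x (r ⊗ₜ[k] r)) + FS' β α x (r ⊗ₜ[k] r) := by
      have hc := congrArg (fun w => cyc (cyc w)) o6
      rw [cyc3] at hc
      rw [n11] at hc
      simp only [map_add, cyc3] at hc
      exact hc
    have hfinal : P01 β α x (r ⊗ₜ[k] r) + P11 β α x (r ⊗ₜ[k] r) + P21 β α x (r ⊗ₜ[k] r)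
        + P02 β α x (r ⊗ₜ[k] r) + P12 β α x (r ⊗ₜ[k] r) + P22 β α x (r ⊗ₜ[k] r)
        + P03 β α x (r ⊗ₜ[k] r) + P13 β α x (r ⊗ₜ[k] r) + P23 β α x (r ⊗ₜ[k] r) = 0 := by
      have a1 := LinearMap.congr_fun (mch1 β α x) (r ⊗ₜ[k] r)
      have a2 := LinearMap.congr_fun (mch2 β α x) (r ⊗ₜ[k] r)
      have a3 := LinearMap.congr_fun (mch3 β α x) (r ⊗ₜ[k] r)
      simp only [LinearMap.comp_apply, LinearMap.add_apply] at a1 a2 a3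
      have hch : c1213 β α (r ⊗ₜ[k] r) + c1223 β α (r ⊗ₜ[k] r) + c1323 β α (r ⊗ₜ[k] r)
          = 0 := by
        have := hchybe
        simp only [chybe] at this
        exact this
      calc P01 β α x (r ⊗ₜ[k] r) + P11 β α x (r ⊗ₜ[k] r) + P21 β α x (r ⊗ₜ[k] r)
            + P02 β α x (r ⊗ₜ[k] r) + P12 β α x (r ⊗ₜ[k] r) + P22 β α x (r ⊗ₜ[k] r)
            + P03 β α x (r ⊗ₜ[k] r) + P13 β α x (r ⊗ₜ[k] r) + P23 β α x (r ⊗ₜ[k] r)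
          = adT3 β α (α x) (c1213 β α (r ⊗ₜ[k] r)) + adT3 β α (α x) (c1223 β α (r ⊗ₜ[k] r))
            + adT3 β α (α x) (c1323 β α (r ⊗ₜ[k] r)) := by
              rw [a1, a2, a3]; abel
        _ = adT3 β α (α x) (c1213 β α (r ⊗ₜ[k] r) + c1223 β α (r ⊗ₜ[k] r)
              + c1323 β α (r ⊗ₜ[k] r)) := by rw [map_add, map_add]
        _ = 0 := by rw [hch, map_zero]
    rw [n11, n23] at hfinal
    simp only [adr_apply]
    rw [hUgen β α x r r]
    simp only [cycSum, LinearMap.add_apply, LinearMap.comp_apply, LinearMap.id_apply,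
      map_add]
    rw [e1, e2, e3, e4]
    simp only [map_add, map_sub]
    rw [o1, o2, o3, o4, o5, o6, n11, n23]
    simp only [map_add, map_sub, cyc3]
    refine Eq.trans ?_ hfinal
    abel
  · -- compatibility
    intro x y
    have hc := LinearMap.congr_fun (mcompat β α x h2 hleib y) r
    simp only [LinearMap.comp_apply, LinearMap.sub_apply] at hc
    rw [hr] at hc
    simpa using hc
end
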